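/- arXiv:1803.00115 — 3 statements merged into one kernel-verified Lean document; each statement's English description precedes it below -/
import Mathlib

section
/- Let G=(V,E) be a finite graph with interior vertex u, let q: E → ℝ be symmetric and z: V → ℂ with z_u ≠ z_v on every edge and z_v ≠ 0 for all v. Suppose ∑_{v~u} q_{uv} = 0 and ∑_{v~u} q_{uv}/(z_u - z_v) = 0. Then ∑_{v~u} q_{uv}/(1/z_u - 1/z_v) = 0, i.e., the inversion z ↦ 1/z preserves the holomorphic quadratic differential equation at u. -/
open Finset

theorem div_one_div_sub_one_div {K : Type*} [Field K] {a b : K} (ha : a ≠ 0) (hb : b ≠ 0)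
    (hab : a ≠ b) (c : K) : c / (1 / a - 1 / b) = a * c - a ^ 2 * (c / (a - b)) := by
  have hab' : a - b ≠ 0 := sub_ne_zero.mpr hab
  rw [div_sub_div _ _ ha hb]
  field_simp
  ring

theorem stmt_1_general {V : Type*} [Fintype V]
    (G : SimpleGraph V) [DecidableRel G.Adj]
    (q : V → V → ℝ)
    (z : V → ℂ) (hz : ∀ u v, G.Adj u v → z u ≠ z v)
    (hz0 : ∀ v, z v ≠ 0) (u : V)
    (h1 : ∑ v ∈ G.neighborFinset u, (q u v : ℂ) = 0)
    (h2 : ∑ v ∈ G.neighborFinset u, (q u v : ℂ) / (z u - z v) = 0) :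
    ∑ v ∈ G.neighborFinset u, (q u v : ℂ) / (1 / z u - 1 / z v) = 0 := by
  calc ∑ v ∈ G.neighborFinset u, (q u v : ℂ) / (1 / z u - 1 / z v)
      = ∑ v ∈ G.neighborFinset u, (z u * q u v - z u ^ 2 * ((q u v : ℂ) / (z u - z v))) :=
        sum_congr rfl fun v hv => div_one_div_sub_one_div (hz0 u) (hz0 v)
          (hz u v ((G.mem_neighborFinset u v).mp hv)) _
    _ = z u * ∑ v ∈ G.neighborFinset u, (q u v : ℂ)
          - z u ^ 2 * ∑ v ∈ G.neighborFinset u, (q u v : ℂ) / (z u - z v) := by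
        rw [sum_sub_distrib, mul_sum, mul_sum]
    _ = 0 := by rw [h1, h2]; ring

/-- Inversion z ↦ 1/z preserves the holomorphic quadratic differential equation
at an interior vertex u, given ∑ q = 0 and ∑ q/(z_u - z_v) = 0 there. -/
theorem stmt_1 {V : Type*} [Fintype V] [DecidableEq V]
    (G : SimpleGraph V) [DecidableRel G.Adj]
    (q : V → V → ℝ) (hsym : ∀ u v, q u v = q v u)
    (z : V → ℂ) (hz : ∀ u v, G.Adj u v → z u ≠ z v)
    (hz0 : ∀ v, z v ≠ 0) (u : V)
    (h1 : ∑ v ∈ G.neighborFinset u, (q u v : ℂ) = 0)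
    (h2 : ∑ v ∈ G.neighborFinset u, (q u v : ℂ) / (z u - z v) = 0) :
    ∑ v ∈ G.neighborFinset u, (q u v : ℂ) / (1 / z u - 1 / z v) = 0 :=
  stmt_1_general G q z hz hz0 u h1 h2
end

section
/- Consider the star graph with center v and three boundary vertices with boundary values 2, 1, 0 and edge conductances c₀, c₁, c₂ > 0 with c₀ + c₁ + c₂ = 1. Then the harmonic extension satisfies h(v) = 2c₀ + c₁, and the double integral 2∫₀¹∫₀^{1−c₀} (2c₀+c₁−2)²(2c₀+c₁−1)²(2c₀+c₁)² / (−4c₀² − 4c₁c₀ + 4c₀ − c₁² + c₁)³ dc₁ dc₀ equals 2. -/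
/-!
Write `h = 2c₀ + c₁` for the harmonic value. Since `c₀ + c₁ + c₂ = 1`, the denominator is
`c₀(h - 2)² + c₁(h - 1)² + c₂h² = 2c₀ + h - h²`, which is affine in `c₀`. After the shift
`c₁ ↦ h` and Fubini over the simplex `{0 < c₀, 2c₀ < h < 1 + c₀}`, the inner `c₀`-integral has a
rational antiderivative; over the fibre `max 0 (h - 1) < c₀ < h / 2` it equals `(1 + 2|h - 1|) / 4`,
whose integral over `0 < h < 2` is `1`.
-/

open intervalIntegral MeasureTheory Set Function

theorem integral_div_two_mul_add_pow_three (K c α β : ℝ)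
    (hne : ∀ a ∈ uIcc α β, 2 * a + c ≠ 0) :
    ∫ a in α..β, K / (2 * a + c) ^ 3 = K / 4 * (1 / (2 * α + c) ^ 2 - 1 / (2 * β + c) ^ 2) := by
  have hderiv : ∀ a ∈ uIcc α β,
      HasDerivAt (fun a => -(K / 4) / (2 * a + c) ^ 2) (K / (2 * a + c) ^ 3) a := by
    intro a ha
    have hlin : HasDerivAt (fun a : ℝ => 2 * a + c) 2 a := by
      simpa using ((hasDerivAt_id a).const_mul 2).add_const c
    refine ((hasDerivAt_const a (-(K / 4))).fun_div (hlin.fun_pow 2)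
      (pow_ne_zero 2 (hne a ha))).congr_deriv ?_
    have hne₀ := hne a ha
    field_simp
    ring
  have hcont : ContinuousOn (fun a : ℝ => K / (2 * a + c) ^ 3) (uIcc α β) :=
    continuousOn_const.div (by fun_prop) fun a ha => pow_ne_zero 3 (hne a ha)
  rw [integral_eq_sub_of_hasDerivAt hderiv hcont.intervalIntegrable]
  ring

theorem two_mul_max_add_sub_sq (h : ℝ) :
    2 * max 0 (h - 1) + (h - h ^ 2) = |h - 1| * (1 - |h - 1|) := by
  rcases le_total h 1 with hh | hh
  · rw [max_eq_left (by linarith), abs_of_nonpos (by linarith)]; ring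
  · rw [max_eq_right (by linarith), abs_of_nonneg (by linarith)]; ring

/-- The integrand in the coordinates `a = c₀`, `h = 2c₀ + c₁`; `starRegion` is the open simplex
`c₀, c₁, c₂ > 0` in these coordinates. -/
noncomputable def starIntegrand (a h : ℝ) : ℝ :=
  (h - 2) ^ 2 * (h - 1) ^ 2 * h ^ 2 / (2 * a + (h - h ^ 2)) ^ 3

def starRegion : Set (ℝ × ℝ) := {p | 0 < p.1 ∧ 2 * p.1 < p.2 ∧ p.2 < 1 + p.1}

theorem starIntegrand_denom_pos {h a : ℝ} (h0 : 0 < h) (h2 : h < 2) (h1 : h ≠ 1)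
    (ha : max 0 (h - 1) ≤ a) : 0 < 2 * a + (h - h ^ 2) := by
  have ht0 : 0 < |h - 1| := abs_pos.2 (sub_ne_zero.2 h1)
  have ht1 : |h - 1| < 1 := abs_sub_lt_iff.2 ⟨by linarith, by linarith⟩
  have := two_mul_max_add_sub_sq h
  nlinarith [mul_pos ht0 (sub_pos.2 ht1)]

theorem integral_starIntegrand_fiber {h : ℝ} (h0 : 0 < h) (h2 : h < 2) (h1 : h ≠ 1) :
    ∫ a in Ioo (max 0 (h - 1)) (h / 2), starIntegrand a h = (1 + 2 * |h - 1|) / 4 := by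
  have hle : max 0 (h - 1) ≤ h / 2 := max_le (by linarith) (by linarith)
  rw [integral_Ioc_eq_integral_Ioo.symm, ← integral_of_le hle]
  simp only [starIntegrand]
  rw [integral_div_two_mul_add_pow_three _ _ _ _ fun a ha =>
    (starIntegrand_denom_pos h0 h2 h1 (uIcc_of_le hle ▸ ha).1).ne', two_mul_max_add_sub_sq]
  have htsq : |h - 1| ^ 2 = (h - 1) ^ 2 := sq_abs _
  rw [show 2 * (h / 2) + (h - h ^ 2) = (1 - |h - 1|) * (1 + |h - 1|) by linear_combination htsq,
    show (h - 2) ^ 2 * (h - 1) ^ 2 * h ^ 2 = |h - 1| ^ 2 * ((1 - |h - 1|) * (1 + |h - 1|)) ^ 2 by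
      rw [show (1 - |h - 1|) * (1 + |h - 1|) = 1 - |h - 1| ^ 2 by ring, htsq]; ring]
  have ht0 : |h - 1| ≠ 0 := abs_ne_zero.2 (sub_ne_zero.2 h1)
  have ht1 : 1 - |h - 1| ≠ 0 := (sub_pos.2 (abs_sub_lt_iff.2 ⟨by linarith, by linarith⟩)).ne'
  have ht2 : 1 + |h - 1| ≠ 0 := by positivity
  field_simp
  ring

theorem measurableSet_starRegion : MeasurableSet starRegion := by
  unfold starRegion
  measurability

theorem indicator_starRegion_eq_fst {a : ℝ} (ha : 0 < a) (h : ℝ) :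
    starRegion.indicator (uncurry starIntegrand) (a, h)
      = (Ioo (2 * a) (1 + a)).indicator (starIntegrand a) h := by
  simp only [indicator_apply, starRegion, mem_ofPred_eq, mem_Ioo, ha, true_and,
    uncurry_apply_pair]

theorem indicator_starRegion_eq_snd (a h : ℝ) :
    starRegion.indicator (uncurry starIntegrand) (a, h)
      = (Ioo (max 0 (h - 1)) (h / 2)).indicator (starIntegrand · h) a := by
  have hiff : (a, h) ∈ starRegion ↔ a ∈ Ioo (max 0 (h - 1)) (h / 2) := by
    simp only [starRegion, mem_ofPred_eq, mem_Ioo, max_lt_iff]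
    constructor
    · rintro ⟨h1, h2, h3⟩; exact ⟨⟨h1, by linarith⟩, by linarith⟩
    · rintro ⟨⟨h1, h2⟩, h3⟩; exact ⟨h1, by linarith, by linarith⟩
  classical
  simp only [indicator_apply, hiff, uncurry_apply_pair]

theorem starIntegrand_nonneg_of_mem {p : ℝ × ℝ} (hp : p ∈ starRegion) :
    0 ≤ starIntegrand p.1 p.2 := by
  obtain ⟨a, h⟩ := p
  obtain ⟨h0, h1, h2⟩ := hp
  have hden : 2 * a + (h - h ^ 2)
      = a * (2 - h) ^ 2 + (h - 2 * a) * (1 - h) ^ 2 + (1 + a - h) * h ^ 2 := by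
    ring
  unfold starIntegrand
  rw [hden]
  have : 0 ≤ h - 2 * a := by linarith
  have : 0 ≤ 1 + a - h := by linarith
  positivity

theorem integral_indicator_starRegion_fst (a : ℝ) :
    ∫ h, starRegion.indicator (uncurry starIntegrand) (a, h)
      = (Ioc 0 1).indicator (fun a => ∫ h in 2 * a..1 + a, starIntegrand a h) a := by
  by_cases ha : a ∈ Ioc 0 1
  · simp_rw [indicator_of_mem ha, indicator_starRegion_eq_fst ha.1,
      MeasureTheory.integral_indicator measurableSet_Ioo,
      integral_of_le (by linarith [ha.2] : 2 * a ≤ 1 + a), integral_Ioc_eq_integral_Ioo]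
  · rw [indicator_of_notMem ha]
    refine integral_eq_zero_of_ae (Filter.Eventually.of_forall fun h => indicator_of_notMem ?_ _)
    rintro ⟨h0, h1, h2⟩
    exact ha ⟨h0, by linarith⟩

theorem continuousOn_starIntegrand_fiber {h : ℝ} (h0 : 0 < h) (h2 : h < 2) (h1 : h ≠ 1) :
    ContinuousOn (starIntegrand · h) (Icc (max 0 (h - 1)) (h / 2)) :=
  continuousOn_const.div (by fun_prop) fun a ha =>
    pow_ne_zero 3 (starIntegrand_denom_pos h0 h2 h1 ha.1).ne'

theorem Ioo_max_zero_sub_one_half_eq_empty {h : ℝ} (hh : h ∉ Ioo 0 2) :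
    Ioo (max 0 (h - 1)) (h / 2) = ∅ := by
  refine Ioo_eq_empty fun hlt => hh ⟨?_, ?_⟩
  · linarith [le_max_left 0 (h - 1)]
  · linarith [le_max_right 0 (h - 1)]

theorem integral_indicator_starRegion_snd_ae_eq :
    (fun h => ∫ a, starRegion.indicator (uncurry starIntegrand) (a, h))
      =ᵐ[volume] (Ioo 0 2).indicator (fun h => (1 + 2 * |h - 1|) / 4) := by
  filter_upwards [Measure.ae_ne volume 1] with h h1
  simp_rw [indicator_starRegion_eq_snd, MeasureTheory.integral_indicator measurableSet_Ioo]
  by_cases hh : h ∈ Ioo 0 2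
  · rw [indicator_of_mem hh, integral_starIntegrand_fiber hh.1 hh.2 h1]
  · rw [indicator_of_notMem hh, Ioo_max_zero_sub_one_half_eq_empty hh, setIntegral_empty]

theorem integrable_indicator_starRegion :
    Integrable (starRegion.indicator (uncurry starIntegrand)) (volume.prod volume) := by
  have hmeas : Measurable (starRegion.indicator (uncurry starIntegrand)) := by
    refine Measurable.indicator ?_ measurableSet_starRegion
    unfold uncurry starIntegrand
    fun_prop
  refine (integrable_prod_iff' hmeas.aestronglyMeasurable).2 ⟨?_, ?_⟩
  · filter_upwards [Measure.ae_ne volume 1] with h h1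
    simp_rw [indicator_starRegion_eq_snd]
    rw [integrable_indicator_iff measurableSet_Ioo]
    by_cases hh : h ∈ Ioo 0 2
    · exact ((continuousOn_starIntegrand_fiber hh.1 hh.2 h1).integrableOn_Icc).mono_set
        Ioo_subset_Icc_self
    · rw [Ioo_max_zero_sub_one_half_eq_empty hh]
      exact integrableOn_empty
  · have hnonneg : ∀ p, 0 ≤ starRegion.indicator (uncurry starIntegrand) p :=
      indicator_nonneg fun p hp => starIntegrand_nonneg_of_mem hp
    simp_rw [Real.norm_of_nonneg (hnonneg _)]
    refine Integrable.congr ?_ integral_indicator_starRegion_snd_ae_eq.symm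
    rw [integrable_indicator_iff measurableSet_Ioo]
    exact (by fun_prop : Continuous fun h : ℝ => (1 + 2 * |h - 1|) / 4).integrableOn_Icc.mono_set
      Ioo_subset_Icc_self

theorem integral_one_add_two_mul_abs_sub_one :
    ∫ h in (0:ℝ)..2, (1 + 2 * |h - 1|) / 4 = 1 := by
  have hint : ∀ a b : ℝ, IntervalIntegrable (fun h : ℝ => (1 + 2 * |h - 1|) / 4) volume a b :=
    fun a b => (by fun_prop : Continuous fun h : ℝ => (1 + 2 * |h - 1|) / 4).intervalIntegrable a b
  have hleft : ∫ h in (0:ℝ)..1, (1 + 2 * |h - 1|) / 4 = ∫ h in (0:ℝ)..1, (3 - 2 * h) / 4 :=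
    integral_congr fun h hh => by
      rw [uIcc_of_le zero_le_one] at hh
      rw [abs_of_nonpos (by linarith [hh.2])]
      ring
  have hright : ∫ h in (1:ℝ)..2, (1 + 2 * |h - 1|) / 4 = ∫ h in (1:ℝ)..2, (2 * h - 1) / 4 :=
    integral_congr fun h hh => by
      rw [uIcc_of_le one_le_two] at hh
      rw [abs_of_nonneg (by linarith [hh.1])]
      ring
  rw [← integral_add_adjacent_intervals (hint 0 1) (hint 1 2), hleft, hright]
  simp only [intervalIntegral.integral_div]
  rw [integral_sub (by simp) ((continuous_const_mul 2).intervalIntegrable _ _),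
    integral_sub ((continuous_const_mul 2).intervalIntegrable _ _) (by simp),
    intervalIntegral.integral_const_mul, intervalIntegral.integral_const_mul, integral_id,
    integral_id]
  norm_num

theorem integral_integral_starIntegrand :
    ∫ a in (0:ℝ)..1, ∫ h in 2 * a..1 + a, starIntegrand a h = 1 := by
  calc ∫ a in (0:ℝ)..1, ∫ h in 2 * a..1 + a, starIntegrand a h
      = ∫ a, ∫ h, starRegion.indicator (uncurry starIntegrand) (a, h) := by
        simp_rw [integral_indicator_starRegion_fst,
          MeasureTheory.integral_indicator measurableSet_Ioc, integral_of_le zero_le_one]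
    _ = ∫ h, ∫ a, starRegion.indicator (uncurry starIntegrand) (a, h) :=
        integral_integral_swap integrable_indicator_starRegion
    _ = ∫ h, (Ioo 0 2).indicator (fun h => (1 + 2 * |h - 1|) / 4) h :=
        integral_congr_ae integral_indicator_starRegion_snd_ae_eq
    _ = 1 := by
        rw [MeasureTheory.integral_indicator measurableSet_Ioo, ← integral_Ioc_eq_integral_Ioo,
          ← integral_of_le zero_le_two, integral_one_add_two_mul_abs_sub_one]

/-- For the 3-star with boundary values 2, 1, 0 and conductances c₀, c₁, c₂ summing
to 1, the harmonic extension satisfies h(v) = 2c₀ + c₁, and the integral formula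
gives |χ(-2)| = 2 for the one-vertex graph. -/
theorem stmt_16 :
    (∀ c₀ c₁ c₂ hv : ℝ, 0 < c₀ → 0 < c₁ → 0 < c₂ → c₀ + c₁ + c₂ = 1 →
      c₀ * (hv - 2) + c₁ * (hv - 1) + c₂ * hv = 0 → hv = 2 * c₀ + c₁) ∧
    2 * ∫ c₀ in (0:ℝ)..1, ∫ c₁ in (0:ℝ)..(1 - c₀),
        ((2 * c₀ + c₁ - 2) ^ 2 * (2 * c₀ + c₁ - 1) ^ 2 * (2 * c₀ + c₁) ^ 2)
          / (-4 * c₀ ^ 2 - 4 * c₁ * c₀ + 4 * c₀ - c₁ ^ 2 + c₁) ^ 3 = 2 := by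
  refine ⟨fun c₀ c₁ c₂ hv _ _ _ hsum hharm => by linear_combination hharm - hv * hsum, ?_⟩
  have hinner : ∀ c₀ : ℝ, ∫ c₁ in (0:ℝ)..(1 - c₀),
      ((2 * c₀ + c₁ - 2) ^ 2 * (2 * c₀ + c₁ - 1) ^ 2 * (2 * c₀ + c₁) ^ 2)
        / (-4 * c₀ ^ 2 - 4 * c₁ * c₀ + 4 * c₀ - c₁ ^ 2 + c₁) ^ 3
      = ∫ h in 2 * c₀..1 + c₀, starIntegrand c₀ h := by
    intro c₀
    rw [integral_congr (g := fun c₁ => starIntegrand c₀ (2 * c₀ + c₁)) fun c₁ _ => by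
        unfold starIntegrand; congr 2; ring,
      integral_comp_add_left (starIntegrand c₀) (2 * c₀), add_zero,
      show 2 * c₀ + (1 - c₀) = 1 + c₀ by ring]
  rw [integral_congr fun c₀ _ => hinner c₀, integral_integral_starIntegrand]
  norm_num
end

section
/- Let z: V → ℂ solve ∑_{w~v} q_{vw}/(z_v − z_w) = 0 at every interior vertex v, with fixed boundary values, and with invertible Dirichlet Laplacian Δ for conductances c_{vw} = q_{vw}/(z_v − z_w)². Then along any smooth variation of a single edge parameter q_e (e = v₁v₂) with the solution z(q_e) varying smoothly, the derivative satisfies dz_v/dq_e = (G_{v,v₁} − G_{v,v₂})/(z_{v₁} − z_{v₂}), where G is the Green's function (inverse of Δ restricted to interior vertices). -/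
/-!
Differentiating the equation `∑_w q_{uw} / (z_u - z_w) = 0` at an interior vertex `u` gives
`∑_w c_{uw} (ż_u - ż_w) = ∑_w q̇_{uw} / (z_u - z_w)`. Only `q_{v₁v₂}` moves, with unit speed, so the
right-hand side is `(δ_{u v₁} - δ_{u v₂}) / (z_{v₁} - z_{v₂})`. Since `ż` vanishes on the boundary,
the left-hand side is the Dirichlet Laplacian of `ż`, and applying the Green's function gives `ż`.
-/

open Finset

theorem HasDerivAt.div_sub {a x y : ℝ → ℂ} {a' x' y' : ℂ} {t₀ : ℝ}
    (ha : HasDerivAt a a' t₀) (hx : HasDerivAt x x' t₀) (hy : HasDerivAt y y' t₀)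
    (hxy : x t₀ ≠ y t₀) :
    HasDerivAt (fun t => a t / (x t - y t))
      (a' / (x t₀ - y t₀) - a t₀ / (x t₀ - y t₀) ^ 2 * (x' - y')) t₀ := by
  have hd : x t₀ - y t₀ ≠ 0 := sub_ne_zero.mpr hxy
  refine (ha.div (hx.sub hy) hd).congr_deriv ?_
  simp only [Pi.sub_apply]
  field_simp

theorem sum_div_sq_mul_sub_eq_of_sum_div_sub_eq_zero {ι : Type*} (s : Finset ι)
    {a y : ι → ℝ → ℂ} {x : ℝ → ℂ} {a' y' : ι → ℂ} {x' : ℂ} {t₀ : ℝ}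
    (ha : ∀ i ∈ s, HasDerivAt (a i) (a' i) t₀) (hx : HasDerivAt x x' t₀)
    (hy : ∀ i ∈ s, HasDerivAt (y i) (y' i) t₀) (hxy : ∀ i ∈ s, x t₀ ≠ y i t₀)
    (h0 : ∀ t, ∑ i ∈ s, a i t / (x t - y i t) = 0) :
    ∑ i ∈ s, a i t₀ / (x t₀ - y i t₀) ^ 2 * (x' - y' i) = ∑ i ∈ s, a' i / (x t₀ - y i t₀) := by
  have hsum := HasDerivAt.fun_sum fun i hi => (ha i hi).div_sub hx (hy i hi) (hxy i hi)
  have hconst : HasDerivAt (fun t => ∑ i ∈ s, a i t / (x t - y i t)) 0 t₀ := by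
    simpa only [h0] using hasDerivAt_const t₀ (0 : ℂ)
  have h := hsum.unique hconst
  rw [sum_sub_distrib, sub_eq_zero] at h
  exact h.symm

theorem hasDerivAt_edgeWeight {V : Type*} [DecidableEq V] {q : ℝ → V → V → ℂ} {t₀ : ℝ} {v₁ v₂ : V}
    (hqsym : ∀ t u w, q t u w = q t w u) (hqe : ∀ t, q t v₁ v₂ = (t : ℂ))
    (hqfix : ∀ t u w, ¬((u = v₁ ∧ w = v₂) ∨ (u = v₂ ∧ w = v₁)) → q t u w = q t₀ u w)
    (u w : V) :
    HasDerivAt (fun t => q t u w) (if s(u, w) = s(v₁, v₂) then 1 else 0) t₀ := by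
  split_ifs with hedge <;> rw [Sym2.eq_iff] at hedge
  · have hq : (fun t => q t u w) = fun t : ℝ => (t : ℂ) := by
      rcases hedge with ⟨rfl, rfl⟩ | ⟨rfl, rfl⟩
      · exact funext hqe
      · exact funext fun t => (hqsym t u w).trans (hqe t)
    simpa [hq] using (hasDerivAt_id t₀).ofReal_comp
  · exact (hasDerivAt_const t₀ (q t₀ u w)).congr_of_eventuallyEq
      (Filter.Eventually.of_forall fun t => hqfix t u w hedge)

section Graph

variable {V : Type*} [DecidableEq V] (G : SimpleGraph V) [Fintype V] [DecidableRel G.Adj]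

theorem sum_edgeIndicator_div_sub {v₁ v₂ : V} (hadj : G.Adj v₁ v₂) (x : V → ℂ) (u : V) :
    ∑ w ∈ G.neighborFinset u, (if s(u, w) = s(v₁, v₂) then 1 else 0) / (x u - x w)
      = ((if u = v₁ then 1 else 0) - (if u = v₂ then 1 else 0)) / (x v₁ - x v₂) := by
  simp only [ite_div, zero_div]
  by_cases h₁ : u = v₁
  · subst h₁
    simp [hadj, hadj.ne]
  by_cases h₂ : u = v₂
  · subst h₂
    have hedge : ∀ w, s(u, w) = s(v₁, u) ↔ w = v₁ := fun w => by
      rw [Sym2.eq_swap (a := v₁), Sym2.congr_right]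
    simp only [hedge, one_div, sum_ite_eq', SimpleGraph.mem_neighborFinset, hadj.symm,
      ↓reduceIte, hadj.ne', zero_sub]
    rw [neg_div, ← div_neg, neg_sub, one_div]
  · have hedge : ∀ w, s(u, w) ≠ s(v₁, v₂) := fun w h => by
      have := Sym2.mem_iff.mp (h ▸ Sym2.mem_mk_left u w); tauto
    simp [hedge, h₁, h₂]

theorem apply_eq_sum_of_eq_zero_on_boundary {Vb : Finset V} {c : V → V → ℂ}
    {Δ : ({v : V // v ∉ Vb} → ℂ) → {v : V // v ∉ Vb} → ℂ}
    (hΔ : ∀ (f : {v : V // v ∉ Vb} → ℂ) (u : {v : V // v ∉ Vb}),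
      Δ f u = ∑ w ∈ G.neighborFinset ↑u,
        c ↑u w * (f u - (if h : w ∈ Vb then 0 else f ⟨w, h⟩)))
    {f : V → ℂ} (hf : ∀ v ∈ Vb, f v = 0) (u : {v : V // v ∉ Vb}) :
    Δ (fun v => f v) u = ∑ w ∈ G.neighborFinset u, c u w * (f u - f w) := by
  rw [hΔ]
  refine sum_congr rfl fun w _ => ?_
  split_ifs with hw
  · rw [hf w hw]
  · rfl

end Graph

theorem stmt_19_general {V : Type*} [Fintype V] [DecidableEq V]
    (G : SimpleGraph V) [DecidableRel G.Adj] (Vb : Finset V)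
    (q : ℝ → V → V → ℂ) (z : ℝ → V → ℂ) (t₀ : ℝ)
    (hqsym : ∀ t u w, q t u w = q t w u)
    (v₁ v₂ : V) (hv₁ : v₁ ∉ Vb) (hv₂ : v₂ ∉ Vb) (hadj : G.Adj v₁ v₂)
    -- only the weight on edge v₁v₂ varies, and it equals the parameter t
    (hqe : ∀ t, q t v₁ v₂ = (t : ℂ))
    (hqfix : ∀ t u w, ¬((u = v₁ ∧ w = v₂) ∨ (u = v₂ ∧ w = v₁)) → q t u w = q t₀ u w)
    -- fixed boundary values
    (hbdry : ∀ t, ∀ v ∈ Vb, z t v = z t₀ v)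
    -- the HQD equations hold at interior vertices for all t
    (heq : ∀ t, ∀ v, v ∉ Vb →
      ∑ w ∈ G.neighborFinset v, q t v w / (z t v - z t w) = 0)
    (hzdist : ∀ u w, G.Adj u w → z t₀ u ≠ z t₀ w)
    -- the solution varies smoothly: z' is the derivative at t₀
    (z' : V → ℂ)
    (hderiv : ∀ v : V, HasDerivAt (fun t => z t v) (z' v) t₀)
    -- the Dirichlet Laplacian at t₀ and its inverse (Green's function)
    (c : V → V → ℂ) (hc : ∀ u w, G.Adj u w → c u w = q t₀ u w / (z t₀ u - z t₀ w) ^ 2)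
    (Δ Ginv : ({v : V // v ∉ Vb} → ℂ) →ₗ[ℂ] ({v : V // v ∉ Vb} → ℂ))
    (hΔ : ∀ (f : {v : V // v ∉ Vb} → ℂ) (u : {v : V // v ∉ Vb}),
      Δ f u = ∑ w ∈ G.neighborFinset ↑u,
        c ↑u w * (f u - (if h : w ∈ Vb then 0 else f ⟨w, h⟩)))
    (hGl : ∀ g, Ginv (Δ g) = g) :
    ∀ v : {v : V // v ∉ Vb},
      z' ↑v = (Ginv (Pi.single ⟨v₁, hv₁⟩ 1) v - Ginv (Pi.single ⟨v₂, hv₂⟩ 1) v)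
        / (z t₀ v₁ - z t₀ v₂) := by
  have hz'_bdry : ∀ v ∈ Vb, z' v = 0 := fun v hv =>
    (hderiv v).unique <| (hasDerivAt_const t₀ (z t₀ v)).congr_of_eventuallyEq
      (Filter.Eventually.of_forall fun t => hbdry t v hv)
  have hlin : ∀ u ∉ Vb, ∑ w ∈ G.neighborFinset u, c u w * (z' u - z' w)
      = ((if u = v₁ then 1 else 0) - (if u = v₂ then 1 else 0)) / (z t₀ v₁ - z t₀ v₂) := by
    intro u hu
    rw [← sum_edgeIndicator_div_sub G hadj, ← sum_div_sq_mul_sub_eq_of_sum_div_sub_eq_zero _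
      (fun w _ => hasDerivAt_edgeWeight hqsym hqe hqfix u w) (hderiv u)
      (fun w _ => hderiv w) (fun w hw => hzdist u w ((G.mem_neighborFinset u w).mp hw))
      (heq · u hu)]
    exact sum_congr rfl fun w hw => by rw [hc u w ((G.mem_neighborFinset u w).mp hw)]
  have hΔz' : Δ (fun v => z' v) = (z t₀ v₁ - z t₀ v₂)⁻¹ •
      (Pi.single ⟨v₁, hv₁⟩ 1 - Pi.single ⟨v₂, hv₂⟩ 1) := by
    ext ⟨u, hu⟩
    rw [apply_eq_sum_of_eq_zero_on_boundary G hΔ hz'_bdry, hlin u hu]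
    simp [Pi.single_apply, div_eq_inv_mul]
  intro v
  rw [← congrFun (hGl fun v => z' v) v, hΔz', map_smul, map_sub]
  simp [div_eq_inv_mul]

/-- Lemma 5.2 (derivative of the realization in an edge weight): if z(t) is a smooth
family of solutions of the HQD equations in which only the weight on the edge
e = v₁v₂ varies (q_e(t) = t), the boundary values are fixed, and the Dirichlet
Laplacian Δ for the conductances c_{vw} = q_{vw}/(z_v - z_w)² at t₀ is invertible
with inverse Ginv, then dz_v/dq_e = (G_{v,v₁} - G_{v,v₂})/(z_{v₁} - z_{v₂}). -/
theorem stmt_19 {V : Type*} [Fintype V] [DecidableEq V]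
    (G : SimpleGraph V) [DecidableRel G.Adj] (Vb : Finset V)
    (q : ℝ → V → V → ℂ) (z : ℝ → V → ℂ) (t₀ : ℝ)
    (hqsym : ∀ t u w, q t u w = q t w u)
    (v₁ v₂ : V) (hv₁ : v₁ ∉ Vb) (hv₂ : v₂ ∉ Vb) (hadj : G.Adj v₁ v₂)
    -- only the weight on edge v₁v₂ varies, and it equals the parameter t
    (hqe : ∀ t, q t v₁ v₂ = (t : ℂ))
    (hqfix : ∀ t u w, ¬((u = v₁ ∧ w = v₂) ∨ (u = v₂ ∧ w = v₁)) → q t u w = q t₀ u w)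
    -- fixed boundary values
    (hbdry : ∀ t, ∀ v ∈ Vb, z t v = z t₀ v)
    -- the HQD equations hold at interior vertices for all t
    (heq : ∀ t, ∀ v, v ∉ Vb →
      ∑ w ∈ G.neighborFinset v, q t v w / (z t v - z t w) = 0)
    (hzdist : ∀ u w, G.Adj u w → z t₀ u ≠ z t₀ w)
    -- the solution varies smoothly: z' is the derivative at t₀
    (z' : V → ℂ)
    (hderiv : ∀ v : V, HasDerivAt (fun t => z t v) (z' v) t₀)
    -- the Dirichlet Laplacian at t₀ and its inverse (Green's function)
    (c : V → V → ℂ) (hc : ∀ u w, G.Adj u w → c u w = q t₀ u w / (z t₀ u - z t₀ w) ^ 2)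
    (Δ Ginv : ({v : V // v ∉ Vb} → ℂ) →ₗ[ℂ] ({v : V // v ∉ Vb} → ℂ))
    (hΔ : ∀ (f : {v : V // v ∉ Vb} → ℂ) (u : {v : V // v ∉ Vb}),
      Δ f u = ∑ w ∈ G.neighborFinset ↑u,
        c ↑u w * (f u - (if h : w ∈ Vb then 0 else f ⟨w, h⟩)))
    (hGl : ∀ g, Ginv (Δ g) = g) (hGr : ∀ g, Δ (Ginv g) = g) :
    ∀ v : {v : V // v ∉ Vb},
      z' ↑v = (Ginv (Pi.single ⟨v₁, hv₁⟩ 1) v - Ginv (Pi.single ⟨v₂, hv₂⟩ 1) v)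
        / (z t₀ v₁ - z t₀ v₂) :=
  stmt_19_general G Vb q z t₀ hqsym v₁ v₂ hv₁ hv₂ hadj hqe hqfix hbdry heq hzdist z' hderiv c hc Δ
    Ginv hΔ hGl
end
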